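/- Let P ⊂ ℝ^d be a rational d-polytope with irredundant presentation P = ⋂_{i=1}^m {x : ⟨a_i, x⟩ ≥ b_i}, each (a_i, b_i) ∈ ℤ^{d+1} primitive, and let F_i = P ∩ {x : ⟨a_i, x⟩ = b_i} be the facet of P lying in the ith bounding hyperplane. Then for v ∈ ℝ^d, the translated cone 𝒞_{F_i} + (v, 0) contains a lattice point of ℤ^{d+1} if and only if ⟨a_i, v⟩ ∈ ℤ. -/

import Mathlib

open Set Pointwise

noncomputable section

/-- The lattice `ℤ^d` inside `ℝ^d`. -/
def latticePts (d : ℕ) : Set (Fin d → ℝ) := {x | ∀ i, ∃ n : ℤ, x i = (n : ℝ)}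

/-- A point of `ℝ^d` with all coordinates rational. -/
def IsRationalPoint {d : ℕ} (x : Fin d → ℝ) : Prop := ∀ i, ∃ q : ℚ, x i = (q : ℝ)

/-- A rational `d`-polytope in `ℝ^d`: the convex hull of finitely many rational points
whose affine span is all of `ℝ^d`. -/
def IsRationalDPolytope {d : ℕ} (P : Set (Fin d → ℝ)) : Prop :=
  ∃ V : Finset (Fin d → ℝ), (∀ x ∈ V, IsRationalPoint x) ∧
    P = convexHull ℝ (V : Set (Fin d → ℝ)) ∧ affineSpan ℝ P = ⊤

/-- The cone over a polytope `R ⊂ ℝ^d`: `𝒞_R = {s(x, 1) : s ≥ 0, x ∈ R} ⊂ ℝ^{d+1}`. -/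
def coneOver {d : ℕ} (R : Set (Fin d → ℝ)) : Set (Fin (d + 1) → ℝ) :=
  {y | ∃ s : ℝ, 0 ≤ s ∧ ∃ x ∈ R, y = s • (Fin.snoc x 1 : Fin (d + 1) → ℝ)}

/-!
If `s (x, 1) + (v, 0)` is a lattice point with `x` on the facet, then `s ∈ ℤ` and
`⟨aᵢ, v⟩ = ⟨aᵢ, s x + v⟩ - s bᵢ ∈ ℤ`.

Conversely, full-dimensionality and irredundancy give a point `y` of the facet lying strictly
inside every other half-space. As `(aᵢ, bᵢ)` is primitive, `bᵢ` is invertible modulo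
`g = gcd aᵢ`, so there are arbitrarily large integers `s` with `g ∣ s bᵢ + ⟨aᵢ, v⟩`. The integer
points of the hyperplane `⟨aᵢ, z⟩ = s bᵢ + ⟨aᵢ, v⟩` lie within a distance `C` of each of its real
points, with `C` independent of `s`; taking such a `z` near `s y + v`, the point
`x = (z - v) / s` is on the facet within `C / s` of `y`, hence in `P` once `s` is large, and
`s (x, 1) + (v, 0) = (z, s)`.
-/

open Filter Topology
open Finset (univ)

section Polyhedron

variable {ι κ : Type*} [Fintype κ] {A : ι → κ → ℝ} {c : ι → ℝ}

theorem lt_dotProduct_of_mem_interior {a : κ → ℝ} {t : ℝ} (ha : a ≠ 0) {x : κ → ℝ}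
    (hx : x ∈ interior {y | t ≤ a ⬝ᵥ y}) : t < a ⬝ᵥ x := by
  have hpath : Tendsto (fun r : ℝ => x - r • a) (𝓝[>] 0) (𝓝 x) := by
    have : Continuous fun r : ℝ => x - r • a := by fun_prop
    simpa using (this.tendsto 0).mono_left nhdsWithin_le_nhds
  obtain ⟨r, hr, hrpos⟩ :=
    ((hpath.eventually (mem_interior_iff_mem_nhds.mp hx)).and self_mem_nhdsWithin).exists
  have haa : 0 < a ⬝ᵥ a := by simpa using Matrix.dotProduct_self_star_pos_iff.mpr ha
  simp only [dotProduct_sub, dotProduct_smul, smul_eq_mul] at hr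
  nlinarith

theorem exists_dotProduct_eq_of_lt_of_le {i : ι} {p q : κ → ℝ} (hp : A i ⬝ᵥ p < c i)
    (hpj : ∀ j ≠ i, c j ≤ A j ⬝ᵥ p) (hq : ∀ j, c j < A j ⬝ᵥ q) :
    ∃ x, A i ⬝ᵥ x = c i ∧ ∀ j ≠ i, c j < A j ⬝ᵥ x := by
  set r := (c i - A i ⬝ᵥ p) / (A i ⬝ᵥ q - A i ⬝ᵥ p)
  have hden : 0 < A i ⬝ᵥ q - A i ⬝ᵥ p := by linarith [hq i]
  have hr : 0 < r := div_pos (by linarith) hden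
  have hr1 : r ≤ 1 := (div_le_one hden).mpr (by linarith [hq i])
  have hline : ∀ j, A j ⬝ᵥ (p + r • (q - p)) = A j ⬝ᵥ p + r * (A j ⬝ᵥ q - A j ⬝ᵥ p) := by
    intro j
    rw [dotProduct_add, dotProduct_smul, dotProduct_sub, smul_eq_mul]
  refine ⟨p + r • (q - p), ?_, fun j hj => ?_⟩
  · rw [hline, div_mul_cancel₀ _ hden.ne']
    ring
  · rw [hline]
    nlinarith [hpj j hj, hq j]

theorem isOpen_setOf_forall_ne_lt_dotProduct [Finite ι] (i : ι) :
    IsOpen {x | ∀ j ≠ i, c j < A j ⬝ᵥ x} := by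
  simp only [ofPred_forall]
  exact isOpen_iInter_of_finite fun j => isOpen_iInter_of_finite fun _ =>
    isOpen_lt continuous_const (continuous_const.dotProduct continuous_id)

variable [Fintype ι] [DecidableEq ι]

theorem exists_lt_of_iInter_erase_ne {i : ι}
    (h : ⋂ j ∈ univ.erase i, {x | c j ≤ A j ⬝ᵥ x} ≠ ⋂ j, {x | c j ≤ A j ⬝ᵥ x}) :
    ∃ p, A i ⬝ᵥ p < c i ∧ ∀ j ≠ i, c j ≤ A j ⬝ᵥ p := by
  contrapose! h
  ext x
  simp only [mem_iInter, Finset.mem_erase, Finset.mem_univ, and_true, mem_ofPred]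
  refine ⟨fun hx j => ?_, fun hx j _ => hx j⟩
  by_cases hji : j = i
  · subst hji
    by_contra! hlt
    obtain ⟨k, hk, hlt'⟩ := h x hlt
    exact (hx k hk).not_gt hlt'
  · exact hx j hji

theorem ne_zero_of_iInter_erase_ne {i : ι} (hne : (⋂ j, {x | c j ≤ A j ⬝ᵥ x}).Nonempty)
    (h : ⋂ j ∈ univ.erase i, {x | c j ≤ A j ⬝ᵥ x} ≠ ⋂ j, {x | c j ≤ A j ⬝ᵥ x}) : A i ≠ 0 := by
  intro hA
  obtain ⟨p, hp, -⟩ := exists_lt_of_iInter_erase_ne h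
  obtain ⟨q, hq⟩ := hne
  have hqi : c i ≤ A i ⬝ᵥ q := mem_iInter.mp hq i
  simp only [hA, zero_dotProduct] at hp hqi
  linarith

theorem exists_dotProduct_eq_and_lt_of_irredundant (i : ι)
    (hint : (interior (⋂ j, {x | c j ≤ A j ⬝ᵥ x})).Nonempty)
    (hirr : ∀ j, ⋂ k ∈ univ.erase j, {x | c k ≤ A k ⬝ᵥ x} ≠ ⋂ k, {x | c k ≤ A k ⬝ᵥ x}) :
    ∃ x, A i ⬝ᵥ x = c i ∧ ∀ j ≠ i, c j < A j ⬝ᵥ x := by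
  have hne := hint.mono interior_subset
  obtain ⟨q, hq⟩ := hint
  have hq_strict : ∀ j, c j < A j ⬝ᵥ q := fun j =>
    lt_dotProduct_of_mem_interior (ne_zero_of_iInter_erase_ne hne (hirr j))
      (interior_mono (iInter_subset _ j) hq)
  obtain ⟨p, hp, hpj⟩ := exists_lt_of_iInter_erase_ne (hirr i)
  exact exists_dotProduct_eq_of_lt_of_le hp hpj hq_strict

end Polyhedron

section IntegerPoints

variable {κ : Type*} [Fintype κ]

theorem abs_dotProduct_le_sum_abs_mul_norm (a y : κ → ℝ) : |a ⬝ᵥ y| ≤ (∑ l, |a l|) * ‖y‖ := by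
  calc |a ⬝ᵥ y| ≤ ∑ l, |a l * y l| := Finset.abs_sum_le_sum_abs _ _
    _ ≤ ∑ l, |a l| * ‖y‖ := Finset.sum_le_sum fun l _ => by
        rw [abs_mul]; exact mul_le_mul_of_nonneg_left (norm_le_pi_norm y l) (abs_nonneg _)
    _ = (∑ l, |a l|) * ‖y‖ := (Finset.sum_mul _ _ _).symm

theorem intCast_dotProduct (a z : κ → ℤ) :
    ((a ⬝ᵥ z : ℤ) : ℝ) = (Int.cast ∘ a : κ → ℝ) ⬝ᵥ (Int.cast ∘ z) := by
  simp [dotProduct]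

theorem norm_intCast_round_sub_le (w : κ → ℝ) :
    ‖(Int.cast ∘ fun l => round (w l) : κ → ℝ) - w‖ ≤ 1 / 2 :=
  (pi_norm_le_iff_of_nonneg (by norm_num)).mpr fun l => by
    simpa [abs_sub_comm] using abs_sub_round (w l)

theorem exists_dotProduct_eq_norm_sub_le (a : κ → ℤ) :
    ∃ C : ℝ, ∀ (w : κ → ℝ) (k : ℤ), univ.gcd a ∣ k → (Int.cast ∘ a : κ → ℝ) ⬝ᵥ w = k →
      ∃ z : κ → ℤ, a ⬝ᵥ z = k ∧ ‖(Int.cast ∘ z : κ → ℝ) - w‖ ≤ C := by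
  obtain ⟨u, hu⟩ := Finset.gcd_eq_sum_mul univ a
  set g := univ.gcd a
  replace hu : a ⬝ᵥ u = g := hu.symm
  set E := ∑ l, |(a l : ℝ)|
  have hE : 0 ≤ E := Finset.sum_nonneg fun l _ => abs_nonneg _
  refine ⟨1 / 2 + E * ‖(Int.cast ∘ u : κ → ℝ)‖, fun w k hk hw => ?_⟩
  set z₀ : κ → ℤ := fun l => round (w l)
  have hz₀ : ‖(Int.cast ∘ z₀ : κ → ℝ) - w‖ ≤ 1 / 2 := norm_intCast_round_sub_le w
  set e := a ⬝ᵥ z₀ - k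
  have he : (e : ℝ) = (Int.cast ∘ a : κ → ℝ) ⬝ᵥ ((Int.cast ∘ z₀ : κ → ℝ) - w) := by
    rw [dotProduct_sub, hw, ← intCast_dotProduct, Int.cast_sub]
  have hge : g ∣ e :=
    dvd_sub (Finset.dvd_sum fun l _ => (Finset.gcd_dvd (Finset.mem_univ l)).mul_right _) hk
  have he_le : |(e : ℝ)| ≤ E := by
    calc |(e : ℝ)| ≤ E * ‖(Int.cast ∘ z₀ : κ → ℝ) - w‖ :=
          he ▸ abs_dotProduct_le_sum_abs_mul_norm _ _
      _ ≤ E * (1 / 2) := by gcongr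
      _ ≤ E := by linarith
  -- undo the error `e` along the Bézout vector `u`, by a shift bounded independently of `w`
  refine ⟨z₀ - (e / g) • u, ?_, ?_⟩
  · rw [dotProduct_sub, dotProduct_smul, smul_eq_mul, hu, Int.ediv_mul_cancel hge]
    exact sub_sub_cancel _ _
  · have hc : |((e / g : ℤ) : ℝ)| ≤ E := by
      have := Int.cast_le (R := ℝ).mpr (Int.abs_ediv_le_abs e g)
      push_cast at this
      linarith
    have hcast : (Int.cast ∘ (z₀ - (e / g) • u) : κ → ℝ) - w =
        ((Int.cast ∘ z₀ : κ → ℝ) - w) - ((e / g : ℤ) : ℝ) • (Int.cast ∘ u : κ → ℝ) := by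
      ext l; simp [sub_right_comm]
    rw [hcast]
    refine (norm_sub_le _ _).trans (add_le_add hz₀ ?_)
    rw [norm_smul, Real.norm_eq_abs]
    exact mul_le_mul_of_nonneg_right hc (norm_nonneg _)

theorem exists_gt_dvd_mul_add {b g : ℤ} (hbg : IsCoprime b g) (hg : g ≠ 0) (n : ℤ) (N : ℝ) :
    ∃ s : ℤ, N < s ∧ g ∣ s * b + n := by
  obtain ⟨u, v, huv⟩ := hbg
  obtain ⟨t, ht⟩ := exists_nat_gt (N + n * u)
  have hg2 : (1 : ℝ) ≤ (g : ℝ) ^ 2 := by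
    have : (1 : ℤ) ≤ g ^ 2 := by nlinarith [Int.one_le_abs hg, sq_abs g]
    exact_mod_cast this
  refine ⟨-(n * u) + g ^ 2 * t, ?_, ⟨n * v + g * t * b, by linear_combination (-n) * huv⟩⟩
  push_cast
  nlinarith [t.cast_nonneg (α := ℝ)]

theorem isCoprime_gcd_of_gcd_cons_eq_one {d : ℕ} {b : ℤ} {a : Fin d → ℤ}
    (h : univ.gcd (Fin.cons b a : Fin (d + 1) → ℤ) = 1) : IsCoprime b (univ.gcd a) := by
  rw [Fin.univ_succ, Finset.gcd_cons, Finset.map_eq_image, Finset.gcd_image] at h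
  simp only [Fin.cons_zero, Fin.cons_succ, Function.comp_def, Function.Embedding.coeFn_mk] at h
  rw [← Int.coe_gcd] at h
  exact Int.isCoprime_iff_gcd_eq_one.mpr (by exact_mod_cast h)

theorem exists_int_smul_add_eq_intCast_near {a : κ → ℤ} {b : ℤ}
    (hab : IsCoprime b (univ.gcd a)) {y v : κ → ℝ} (hy : (Int.cast ∘ a : κ → ℝ) ⬝ᵥ y = b)
    {n : ℤ} (hv : (Int.cast ∘ a : κ → ℝ) ⬝ᵥ v = n) {ε : ℝ} (hε : 0 < ε) :
    ∃ s : ℤ, 0 < s ∧ ∃ x, (Int.cast ∘ a : κ → ℝ) ⬝ᵥ x = b ∧ dist x y < ε ∧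
      ∃ z : κ → ℤ, (s : ℝ) • x + v = Int.cast ∘ z := by
  obtain ⟨C, hC⟩ := exists_dotProduct_eq_norm_sub_le a
  have hg : univ.gcd a ≠ 0 := by
    intro hg
    have ha : a = 0 := funext fun l => Finset.gcd_eq_zero_iff.mp hg l (Finset.mem_univ l)
    have hb : b = 0 := by simpa [ha] using hy.symm
    exact not_isCoprime_zero_zero (hb ▸ hg ▸ hab)
  obtain ⟨s, hsN, hdvd⟩ := exists_gt_dvd_mul_add hab hg n (max 0 (C / ε))
  have hs : (0 : ℝ) < s := (le_max_left _ _).trans_lt hsN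
  have hCs : C / s < ε := by
    rw [div_lt_iff₀ hs, mul_comm, ← div_lt_iff₀ hε]
    exact (le_max_right _ _).trans_lt hsN
  obtain ⟨z, hz, hzw⟩ := hC ((s : ℝ) • y + v) (s * b + n) hdvd (by
    rw [dotProduct_add, dotProduct_smul, hy, hv, smul_eq_mul]; push_cast; ring)
  refine ⟨s, by exact_mod_cast hs, (s : ℝ)⁻¹ • ((Int.cast ∘ z : κ → ℝ) - v), ?_, ?_, z, ?_⟩
  · rw [dotProduct_smul, dotProduct_sub, ← intCast_dotProduct, hz, hv, smul_eq_mul]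
    push_cast
    field_simp
    ring
  · have hdiff : (s : ℝ)⁻¹ • ((Int.cast ∘ z : κ → ℝ) - v) - y =
        (s : ℝ)⁻¹ • ((Int.cast ∘ z : κ → ℝ) - ((s : ℝ) • y + v)) := by
      rw [smul_sub _ _ ((s : ℝ) • y + v), smul_add, smul_smul, inv_mul_cancel₀ hs.ne', one_smul,
        smul_sub]
      abel
    rw [dist_eq_norm, hdiff, norm_smul, norm_inv, Real.norm_eq_abs, abs_of_pos hs]
    calc (s : ℝ)⁻¹ * ‖(Int.cast ∘ z : κ → ℝ) - ((s : ℝ) • y + v)‖ ≤ (s : ℝ)⁻¹ * C := by gcongr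
      _ < ε := by rwa [inv_mul_eq_div]
  · rw [smul_smul, mul_inv_cancel₀ hs.ne', one_smul, sub_add_cancel]

end IntegerPoints

section Lattice

variable {d : ℕ}

theorem mem_latticePts_iff {y : Fin d → ℝ} :
    y ∈ latticePts d ↔ ∃ z : Fin d → ℤ, y = Int.cast ∘ z := by
  refine ⟨fun h => ?_, ?_⟩
  · choose z hz using h
    exact ⟨z, funext hz⟩
  · rintro ⟨z, rfl⟩ l
    exact ⟨z l, rfl⟩

theorem smul_snoc_add_snoc_mem_latticePts_iff (s : ℝ) (x v : Fin d → ℝ) :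
    s • (Fin.snoc x 1 : Fin (d + 1) → ℝ) + Fin.snoc v 0 ∈ latticePts (d + 1) ↔
      (∃ k : ℤ, s = k) ∧ s • x + v ∈ latticePts d := by
  simp only [latticePts, mem_ofPred, Fin.forall_fin_succ', Pi.add_apply, Pi.smul_apply,
    Fin.snoc_castSucc, Fin.snoc_last, smul_eq_mul, mul_one, add_zero]
  exact and_comm

theorem exists_int_dotProduct_eq_of_smul_add_mem_latticePts {a : Fin d → ℤ} {b : ℤ} {s : ℝ}
    {x v : Fin d → ℝ} (hs : ∃ k : ℤ, s = k) (hx : (Int.cast ∘ a : Fin d → ℝ) ⬝ᵥ x = b)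
    (hlat : s • x + v ∈ latticePts d) : ∃ n : ℤ, (Int.cast ∘ a : Fin d → ℝ) ⬝ᵥ v = n := by
  obtain ⟨k, rfl⟩ := hs
  obtain ⟨z, hz⟩ := mem_latticePts_iff.mp hlat
  refine ⟨a ⬝ᵥ z - k * b, ?_⟩
  rw [eq_sub_of_add_eq' hz, dotProduct_sub, dotProduct_smul, hx, ← intCast_dotProduct, smul_eq_mul]
  push_cast
  ring

end Lattice

theorem stmt14 {d m : ℕ} (P : Set (Fin d → ℝ)) (hP : IsRationalDPolytope P)
    (a : Fin m → Fin d → ℤ) (b : Fin m → ℤ)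
    -- the irredundant presentation `P = ⋂ᵢ {x : ⟨aᵢ, x⟩ ≥ bᵢ}` by primitive `(aᵢ, bᵢ)`
    (hpres : P = ⋂ i, {x : Fin d → ℝ | (b i : ℝ) ≤ ∑ j, (a i j : ℝ) * x j})
    (hprim : ∀ i, Finset.univ.gcd (Fin.cons (b i) (a i)) = 1)
    (hirr : ∀ i : Fin m,
      (⋂ j ∈ Finset.univ.erase i, {x : Fin d → ℝ | (b j : ℝ) ≤ ∑ l, (a j l : ℝ) * x l}) ≠ P)
    (i : Fin m) (v : Fin d → ℝ) :
    (∃ y ∈ (fun z => z + (Fin.snoc v 0 : Fin (d + 1) → ℝ)) ''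
        coneOver (P ∩ {x : Fin d → ℝ | ∑ j, (a i j : ℝ) * x j = (b i : ℝ)}),
      y ∈ latticePts (d + 1)) ↔
    ∃ n : ℤ, ∑ j, (a i j : ℝ) * v j = (n : ℝ) := by
  constructor
  · rintro ⟨_, ⟨_, ⟨s, -, x, ⟨-, hx⟩, rfl⟩, rfl⟩, hlat⟩
    rw [smul_snoc_add_snoc_mem_latticePts_iff] at hlat
    exact exists_int_dotProduct_eq_of_smul_add_mem_latticePts hlat.1 hx hlat.2
  · rintro ⟨n, hn⟩
    obtain ⟨V, -, hPV, hspan⟩ := hP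
    have hint : (interior P).Nonempty :=
      (hPV ▸ convex_convexHull ℝ _ : Convex ℝ P).interior_nonempty_iff_affineSpan_eq_top.mpr hspan
    subst hpres
    obtain ⟨y, hyi, hyj⟩ :=
      exists_dotProduct_eq_and_lt_of_irredundant (A := fun j => Int.cast ∘ a j) i hint hirr
    have hopen := isOpen_setOf_forall_ne_lt_dotProduct (A := fun j => Int.cast ∘ a j)
      (c := fun j => (b j : ℝ)) i
    obtain ⟨ε, hε, hball⟩ := Metric.isOpen_iff.mp hopen y hyj
    obtain ⟨s, hs, x, hxi, hxy, z, hz⟩ :=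
      exists_int_smul_add_eq_intCast_near (isCoprime_gcd_of_gcd_cons_eq_one (hprim i)) hyi hn hε
    have hxP : x ∈ ⋂ j, {x : Fin d → ℝ | (b j : ℝ) ≤ ∑ l, (a j l : ℝ) * x l} :=
      mem_iInter.mpr fun j => by
        rcases eq_or_ne j i with rfl | hj
        · exact hxi.ge
        · exact (hball hxy j hj).le
    refine ⟨_, ⟨_, ⟨s, by positivity, x, ⟨hxP, hxi⟩, rfl⟩, rfl⟩, ?_⟩
    rw [smul_snoc_add_snoc_mem_latticePts_iff]
    exact ⟨⟨s, rfl⟩, mem_latticePts_iff.mpr ⟨z, hz⟩⟩
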